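/- arXiv:math/0409593 — 4 statements merged into one kernel-verified Lean document; each statement's English description precedes it below -/
import Mathlib

section
/- The tensor product A ⊗_{A^s} A is a free left A-module of rank 2 with basis {1⊗1, 1⊗α_s}: every element can be written uniquely as x·(1⊗1) + y·(1⊗α_s) with x, y ∈ A. -/
open scoped TensorProduct

noncomputable section

/-- The embedding of linear forms on `V` into the polynomial algebra `A = k[V]`
(realized as `MvPolynomial ι k` via a basis `b` of the dual space `V*`, so that `A`
is the symmetric algebra of `V*`). -/
def dualToPoly {k V : Type*} [Field k] [AddCommGroup V] [Module k V] {ι : Type*}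
    (b : Module.Basis ι k (Module.Dual k V)) (φ : Module.Dual k V) : MvPolynomial ι k :=
  (b.repr φ).sum fun i c => MvPolynomial.C c * MvPolynomial.X i

/-- The algebra endomorphism of `A = k[V]` induced by `s : V → V`, i.e. `f ↦ f ∘ s`. -/
def polyAut {k V : Type*} [Field k] [AddCommGroup V] [Module k V] {ι : Type*}
    (b : Module.Basis ι k (Module.Dual k V)) (s : V →ₗ[k] V) :
    MvPolynomial ι k →ₐ[k] MvPolynomial ι k :=
  MvPolynomial.aeval fun i => dualToPoly b (s.dualMap (b i))

/-- The invariant subalgebra `A^s ⊆ A = k[V]`. -/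
def invariantSub {k V : Type*} [Field k] [AddCommGroup V] [Module k V] {ι : Type*}
    (b : Module.Basis ι k (Module.Dual k V)) (s : V →ₗ[k] V) : Subalgebra k (MvPolynomial ι k) :=
  AlgHom.equalizer (polyAut b s) (AlgHom.id k (MvPolynomial ι k))

set_option linter.unusedSectionVars false

section Aux
variable {k V : Type*} [Field k] [AddCommGroup V] [Module k V] {ι : Type*}
  (b : Module.Basis ι k (Module.Dual k V)) (s : V →ₗ[k] V)

def dualToPolyLin : Module.Dual k V →ₗ[k] MvPolynomial ι k :=
  (Finsupp.linearCombination k MvPolynomial.X).comp (b.repr : Module.Dual k V →ₗ[k] (ι →₀ k))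

lemma dualToPoly_eq_lin (φ : Module.Dual k V) : dualToPoly b φ = dualToPolyLin b φ := by
  rw [dualToPoly, dualToPolyLin]
  simp only [LinearMap.comp_apply, LinearEquiv.coe_coe, Finsupp.linearCombination_apply]
  exact Finsupp.sum_congr fun i _ => (MvPolynomial.smul_eq_C_mul _ _).symm

lemma dualToPolyLin_basis (i : ι) : dualToPolyLin b (b i) = MvPolynomial.X i := by
  simp [dualToPolyLin]

lemma polyAut_dualToPoly (φ : Module.Dual k V) :
    polyAut b s (dualToPoly b φ) = dualToPoly b (s.dualMap φ) := by
  rw [dualToPoly_eq_lin, dualToPoly_eq_lin]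
  have : (polyAut b s).toLinearMap ∘ₗ dualToPolyLin b = dualToPolyLin b ∘ₗ s.dualMap := by
    apply b.ext; intro i
    simp only [LinearMap.comp_apply, AlgHom.toLinearMap_apply, dualToPolyLin_basis]
    rw [polyAut, MvPolynomial.aeval_X, dualToPoly_eq_lin]
  exact DFunLike.congr_fun this φ

end Aux

section Aux
variable {k V : Type*} [Field k] [AddCommGroup V] [Module k V]
  (s : V →ₗ[k] V)

lemma dualMap_dualMap (hs : s ∘ₗ s = LinearMap.id) (φ : Module.Dual k V) :
    s.dualMap (s.dualMap φ) = φ := by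
  ext v
  have hv : s (s v) = v := by simpa using DFunLike.congr_fun hs v
  simp [LinearMap.dualMap_apply, hv]

lemma dualMap_alpha (hs : s ∘ₗ s = LinearMap.id) (α : Module.Dual k V)
    (hker : LinearMap.ker α = LinearMap.ker (s - LinearMap.id)) :
    s.dualMap α = -α := by
  ext v
  have hmem : s v + v ∈ LinearMap.ker α := by
    rw [hker, LinearMap.mem_ker]
    have hv : s (s v) = v := by simpa using DFunLike.congr_fun hs v
    simp [LinearMap.sub_apply, map_add, hv, add_comm]
  have h0 : α (s v + v) = 0 := hmem
  rw [map_add] at h0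
  simp only [LinearMap.dualMap_apply, LinearMap.neg_apply]
  linear_combination h0

lemma exists_scalar [FiniteDimensional k V] (hchar : (2 : k) ≠ 0)
    (hs : s ∘ₗ s = LinearMap.id)
    (hhyp : Module.finrank k (LinearMap.ker (s - LinearMap.id)) + 1 = Module.finrank k V)
    (α : Module.Dual k V) (hα : α ≠ 0)
    (hker : LinearMap.ker α = LinearMap.ker (s - LinearMap.id))
    (φ : Module.Dual k V) : ∃ c : k, s.dualMap φ - φ = c • α := by
  set T : Module.Dual k V →ₗ[k] Module.Dual k V := s.dualMap + LinearMap.id with hT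
  have hTd : T = (s + LinearMap.id).dualMap := by
    ext φ v; simp [hT, LinearMap.dualMap_apply]
  have hαT : α ∈ LinearMap.ker T := by
    rw [LinearMap.mem_ker]
    simp [hT, dualMap_alpha s hs α hker]
  have hle : (k ∙ α) ≤ LinearMap.ker T := (Submodule.span_singleton_le_iff_mem _ _).2 hαT
  -- rank bound
  have hrange : LinearMap.ker (s - LinearMap.id) ≤ LinearMap.range (s + LinearMap.id) := by
    intro v hv
    rw [LinearMap.mem_ker] at hv
    have hsv : s v = v := by
      have := hv; rw [LinearMap.sub_apply] at this; simpa [sub_eq_zero] using this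
    refine ⟨(2⁻¹ : k) • v, ?_⟩
    rw [LinearMap.add_apply, map_smul, hsv, LinearMap.id_apply, ← smul_add]
    rw [← two_smul k v, smul_smul, inv_mul_cancel₀ hchar, one_smul]
  have h1 : Module.finrank k (LinearMap.range T) = Module.finrank k (LinearMap.range (s + LinearMap.id)) := by
    rw [hTd]; exact LinearMap.finrank_range_dualMap_eq_finrank_range _
  have h2 : Module.finrank k (LinearMap.ker (s - LinearMap.id)) ≤
      Module.finrank k (LinearMap.range (s + LinearMap.id)) :=
    Submodule.finrank_mono hrange
  have h3 : Module.finrank k (LinearMap.range T) + Module.finrank k (LinearMap.ker T)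
      = Module.finrank k (Module.Dual k V) := LinearMap.finrank_range_add_finrank_ker T
  have h4 : Module.finrank k (Module.Dual k V) = Module.finrank k V :=
    Subspace.dual_finrank_eq
  have h5 : Module.finrank k (LinearMap.ker T) ≤ 1 := by omega
  have h6 : Module.finrank k (k ∙ α) = 1 := finrank_span_singleton hα
  have heq : (k ∙ α) = LinearMap.ker T :=
    Submodule.eq_of_le_of_finrank_le hle (by omega)
  have hmem : s.dualMap φ - φ ∈ LinearMap.ker T := by
    rw [LinearMap.mem_ker]
    simp [hT, map_sub, dualMap_dualMap s hs φ]
    abel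
  rw [← heq, Submodule.mem_span_singleton] at hmem
  obtain ⟨c, hc⟩ := hmem
  exact ⟨c, hc.symm⟩

end Aux

section Aux3
variable {k V : Type*} [Field k] [AddCommGroup V] [Module k V] {ι : Type*}
  (b : Module.Basis ι k (Module.Dual k V)) (s : V →ₗ[k] V)

lemma dualToPoly_basis (i : ι) : dualToPoly b (b i) = MvPolynomial.X i := by
  rw [dualToPoly_eq_lin, dualToPolyLin_basis]

lemma polyAut_invol (hs : s ∘ₗ s = LinearMap.id) (f : MvPolynomial ι k) :
    polyAut b s (polyAut b s f) = f := by
  have h : (polyAut b s).comp (polyAut b s) = AlgHom.id k (MvPolynomial ι k) := by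
    apply MvPolynomial.algHom_ext
    intro i
    rw [AlgHom.comp_apply, AlgHom.id_apply]
    rw [show polyAut b s (MvPolynomial.X i) = dualToPoly b (s.dualMap (b i)) from
      MvPolynomial.aeval_X _ i]
    rw [polyAut_dualToPoly, dualMap_dualMap s hs, dualToPoly_basis]
  exact DFunLike.congr_fun h f

lemma dualToPoly_ne_zero (α : Module.Dual k V) (hα : α ≠ 0) : dualToPoly b α ≠ 0 := by
  classical
  obtain ⟨i, hi⟩ : ∃ i, b.repr α i ≠ 0 := by
    by_contra h
    push_neg at h
    apply hα
    have : b.repr α = 0 := Finsupp.ext h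
    simpa using congrArg b.repr.symm this
  intro h0
  apply hi
  have : MvPolynomial.coeff (Finsupp.single i 1) (dualToPoly b α) = b.repr α i := by
    rw [dualToPoly]
    rw [show MvPolynomial.coeff (Finsupp.single i 1)
        ((b.repr α).sum fun j c => MvPolynomial.C c * MvPolynomial.X j)
      = (b.repr α).sum fun j c =>
          MvPolynomial.coeff (Finsupp.single i 1) (MvPolynomial.C c * MvPolynomial.X j) from
      map_finsuppSum (MvPolynomial.lcoeff k (Finsupp.single i 1)) _ _]
    rw [Finsupp.sum_eq_single i ?_ (by simp)]
    · simp [MvPolynomial.coeff_C_mul, MvPolynomial.coeff_X]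
    · intro j _ hj
      rw [MvPolynomial.coeff_C_mul, MvPolynomial.coeff_X', if_neg, mul_zero]
      intro hcontra
      exact hj (by
        have := congrArg (fun f => f j) hcontra
        simpa using (Finsupp.single_left_injective one_ne_zero).eq_iff.mp hcontra)
  rw [h0] at this
  simp at this
  exact this.symm

end Aux3

section Aux4
variable {k V : Type*} [Field k] [AddCommGroup V] [Module k V] [FiniteDimensional k V] {ι : Type*}
  (b : Module.Basis ι k (Module.Dual k V)) (s : V →ₗ[k] V)
  (hchar : (2 : k) ≠ 0) (hs : s ∘ₗ s = LinearMap.id)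
  (hhyp : Module.finrank k (LinearMap.ker (s - LinearMap.id)) + 1 = Module.finrank k V)
  (α : Module.Dual k V) (hα : α ≠ 0)
  (hker : LinearMap.ker α = LinearMap.ker (s - LinearMap.id))

include hchar hs hhyp hα hker

lemma polyAut_sub_mem (f : MvPolynomial ι k) :
    polyAut b s f - f ∈ Ideal.span {dualToPoly b α} := by
  induction f using MvPolynomial.induction_on with
  | C a =>
      rw [show polyAut b s (MvPolynomial.C a) = MvPolynomial.C a by
        rw [polyAut, MvPolynomial.aeval_C, MvPolynomial.algebraMap_eq]]
      simp
  | add p q hp hq =>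
      rw [map_add]
      have h : polyAut b s p + polyAut b s q - (p + q)
          = (polyAut b s p - p) + (polyAut b s q - q) := by ring
      rw [h]
      exact Ideal.add_mem _ hp hq
  | mul_X p i hp =>
      obtain ⟨c, hc⟩ := exists_scalar s hchar hs hhyp α hα hker (b i)
      have hXi : polyAut b s (MvPolynomial.X i) - MvPolynomial.X i = c • dualToPoly b α := by
        rw [show polyAut b s (MvPolynomial.X i) = dualToPoly b (s.dualMap (b i)) from
          MvPolynomial.aeval_X _ i]
        rw [dualToPoly_eq_lin, ← dualToPolyLin_basis b i, ← map_sub, hc, map_smul,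
          ← dualToPoly_eq_lin]
      rw [map_mul]
      have h : polyAut b s p * polyAut b s (MvPolynomial.X i) - p * MvPolynomial.X i
          = polyAut b s p * (polyAut b s (MvPolynomial.X i) - MvPolynomial.X i)
            + (polyAut b s p - p) * MvPolynomial.X i := by ring
      rw [h, hXi, MvPolynomial.smul_eq_C_mul]
      refine Ideal.add_mem _ ?_ (Ideal.mul_mem_right _ _ hp)
      exact Ideal.mul_mem_left _ _ (Ideal.mul_mem_left _ _
        (Ideal.subset_span (Set.mem_singleton _)))

/-- Existence of the decomposition `g = p + a * q` with `p, q` invariant. -/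
lemma exists_decomp (g : MvPolynomial ι k) :
    ∃ p q : MvPolynomial ι k, polyAut b s p = p ∧ polyAut b s q = q ∧
      g = p + dualToPoly b α * q := by
  have hmem : g - polyAut b s g ∈ Ideal.span {dualToPoly b α} := by
    have := polyAut_sub_mem b s hchar hs hhyp α hα hker g
    have h := neg_mem this
    simpa using h
  rw [Ideal.mem_span_singleton] at hmem
  obtain ⟨g₀, hg₀⟩ := hmem
  have hane : dualToPoly b α ≠ 0 := dualToPoly_ne_zero b α hα
  have hg₀inv : polyAut b s g₀ = g₀ := by
    have h1 : polyAut b s (g - polyAut b s g) = polyAut b s g - g := by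
      rw [map_sub, polyAut_invol b s hs]
    rw [hg₀, map_mul] at h1
    have hσa : polyAut b s (dualToPoly b α) = -dualToPoly b α := by
      rw [polyAut_dualToPoly, dualMap_alpha s hs α hker, dualToPoly_eq_lin, map_neg,
        ← dualToPoly_eq_lin]
    rw [hσa] at h1
    have h2 : polyAut b s g - g = -(dualToPoly b α * g₀) := by rw [← hg₀]; ring
    rw [h2] at h1
    have h3 : dualToPoly b α * polyAut b s g₀ = dualToPoly b α * g₀ := by
      linear_combination -h1
    exact mul_left_cancel₀ hane h3
  refine ⟨(2⁻¹ : k) • (g + polyAut b s g), (2⁻¹ : k) • g₀, ?_, ?_, ?_⟩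
  · rw [map_smul, map_add, polyAut_invol b s hs, add_comm]
  · rw [map_smul, hg₀inv]
  · rw [mul_smul_comm, ← smul_add]
    have : g + polyAut b s g + dualToPoly b α * g₀ = (2 : k) • g := by
      rw [← hg₀, two_smul]; ring
    rw [this, smul_smul, inv_mul_cancel₀ hchar, one_smul]

/-- Uniqueness: invariants `p, q` with `p + a q = 0` vanish. -/
lemma decomp_unique (p q : MvPolynomial ι k)
    (hpinv : polyAut b s p = p) (hqinv : polyAut b s q = q)
    (h : p + dualToPoly b α * q = 0) : p = 0 ∧ q = 0 := by
  have hane : dualToPoly b α ≠ 0 := dualToPoly_ne_zero b α hα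
  have hσa : polyAut b s (dualToPoly b α) = -dualToPoly b α := by
    rw [polyAut_dualToPoly, dualMap_alpha s hs α hker, dualToPoly_eq_lin, map_neg,
      ← dualToPoly_eq_lin]
  have h2 : p - dualToPoly b α * q = 0 := by
    have := congrArg (polyAut b s) h
    rw [map_add, map_mul, hpinv, hqinv, hσa, map_zero] at this
    linear_combination this
  have hp : (2 : k) • p = 0 := by
    rw [two_smul]
    linear_combination h + h2
  have hp0 : p = 0 := by
    rcases smul_eq_zero.mp hp with h' | h'
    · exact absurd h' hchar
    · exact h'
  refine ⟨hp0, ?_⟩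
  have : dualToPoly b α * q = 0 := by rw [hp0] at h; linear_combination h
  rcases mul_eq_zero.mp this with h' | h'
  · exact absurd h' hane
  · exact h'

end Aux4

/-- `A ⊗_{A^s} A` is a free left `A`-module of rank 2 with basis `{1 ⊗ 1, 1 ⊗ α_s}`:
every element can be written uniquely as `x • (1 ⊗ 1) + y • (1 ⊗ α_s)` with `x, y ∈ A`. -/
theorem tensor_free_rank_two
    {k : Type*} [Field k] (hchar : (2 : k) ≠ 0)
    {V : Type*} [AddCommGroup V] [Module k V] [FiniteDimensional k V]
    (s : V →ₗ[k] V) (hs : s ∘ₗ s = LinearMap.id)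
    (hhyp : Module.finrank k (LinearMap.ker (s - LinearMap.id)) + 1 = Module.finrank k V)
    (α : Module.Dual k V) (hα : α ≠ 0)
    (hker : LinearMap.ker α = LinearMap.ker (s - LinearMap.id))
    {ι : Type*} (b : Module.Basis ι k (Module.Dual k V))
    (z : MvPolynomial ι k ⊗[invariantSub b s] MvPolynomial ι k) :
    ∃! xy : MvPolynomial ι k × MvPolynomial ι k,
      z = xy.1 • ((1 : MvPolynomial ι k) ⊗ₜ[invariantSub b s] (1 : MvPolynomial ι k))
        + xy.2 • ((1 : MvPolynomial ι k) ⊗ₜ[invariantSub b s] dualToPoly b α) := by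
  classical
  have memR : ∀ f : MvPolynomial ι k, f ∈ invariantSub b s ↔ polyAut b s f = f := fun f =>
    AlgHom.mem_equalizer _ _ f
  have smul_def' : ∀ (p : invariantSub b s) (x : MvPolynomial ι k),
      p • x = (p : MvPolynomial ι k) * x := fun p x => by
    rw [Algebra.smul_def]; rfl
  -- linear independence of {1, a} over the invariants
  have hli : LinearIndependent (invariantSub b s)
      ![(1 : MvPolynomial ι k), dualToPoly b α] := by
    rw [LinearIndependent.pair_iff]
    intro p q hpq
    rw [smul_def', smul_def', mul_one] at hpq
    have h : (p : MvPolynomial ι k) + dualToPoly b α * (q : MvPolynomial ι k) = 0 := by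
      rw [mul_comm]; exact hpq
    obtain ⟨hp0, hq0⟩ := decomp_unique b s hchar hs hhyp α hα hker _ _
      ((memR _).mp p.2) ((memR _).mp q.2) h
    exact ⟨Subtype.ext hp0, Subtype.ext hq0⟩
  -- spanning
  have hrange : Set.range ![(1 : MvPolynomial ι k), dualToPoly b α]
      = {(1 : MvPolynomial ι k), dualToPoly b α} := by
    ext x
    constructor
    · rintro ⟨i, rfl⟩
      fin_cases i <;> simp
    · rintro (rfl | rfl)
      · exact ⟨0, rfl⟩
      · exact ⟨1, rfl⟩
  have hsp : ⊤ ≤ Submodule.span (invariantSub b s)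
      (Set.range ![(1 : MvPolynomial ι k), dualToPoly b α]) := by
    intro g _
    rw [hrange, Submodule.mem_span_pair]
    obtain ⟨p, q, hpinv, hqinv, hgeq⟩ := exists_decomp b s hchar hs hhyp α hα hker g
    refine ⟨⟨p, (memR _).mpr hpinv⟩, ⟨q, (memR _).mpr hqinv⟩, ?_⟩
    rw [smul_def', smul_def', mul_one, mul_comm]
    exact hgeq.symm
  let bb : Module.Basis (Fin 2) (invariantSub b s) (MvPolynomial ι k) := Module.Basis.mk hli hsp
  let cb : Module.Basis (Fin 2) (MvPolynomial ι k)
      (MvPolynomial ι k ⊗[invariantSub b s] MvPolynomial ι k) :=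
    bb.baseChange (MvPolynomial ι k)
  have hbb0 : bb 0 = 1 := by rw [Module.Basis.mk_apply]; rfl
  have hbb1 : bb 1 = dualToPoly b α := by rw [Module.Basis.mk_apply]; rfl
  have hc0 : cb 0 = (1 : MvPolynomial ι k) ⊗ₜ[invariantSub b s] (1 : MvPolynomial ι k) := by
    rw [Module.Basis.baseChange_apply, hbb0]
  have hc1 : cb 1 = (1 : MvPolynomial ι k) ⊗ₜ[invariantSub b s] dualToPoly b α := by
    rw [Module.Basis.baseChange_apply, hbb1]
  refine ⟨(cb.repr z 0, cb.repr z 1), ?_, ?_⟩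
  · have hz := cb.sum_repr z
    rw [Fin.sum_univ_two] at hz
    rw [← hc0, ← hc1]
    exact hz.symm
  · rintro ⟨x, y⟩ h
    simp only at h
    have hrepr : cb.repr z = Finsupp.single 0 x + Finsupp.single 1 y := by
      rw [h, ← hc0, ← hc1, map_add, map_smul, map_smul, cb.repr_self, cb.repr_self,
        Finsupp.smul_single, Finsupp.smul_single, smul_eq_mul, smul_eq_mul, mul_one, mul_one]
    have h0 : cb.repr z 0 = x := by rw [hrepr]; simp
    have h1 : cb.repr z 1 = y := by rw [hrepr]; simp [Finsupp.single_apply]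
    exact Prod.ext h0.symm h1.symm
end
end

section
/- The A-linear map A ⊗_{A^s} A → A × A determined by x⊗y ↦ (x·y, x·s(y)) is injective. -/
open scoped TensorProduct

noncomputable section

namespace Aux

variable {k V : Type*} [Field k] [AddCommGroup V] [Module k V] {ι : Type*}

def dualToPolyL (b : Module.Basis ι k (Module.Dual k V)) :
    Module.Dual k V →ₗ[k] MvPolynomial ι k :=
  (Finsupp.linearCombination k fun i => (MvPolynomial.X i : MvPolynomial ι k)) ∘ₗ
    b.repr.toLinearMap

lemma dualToPoly_eq (b : Module.Basis ι k (Module.Dual k V)) (φ : Module.Dual k V) :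
    dualToPoly b φ = dualToPolyL b φ := by
  simp [dualToPoly, dualToPolyL, Finsupp.linearCombination_apply,
    MvPolynomial.smul_eq_C_mul]

lemma dualToPoly_basis (b : Module.Basis ι k (Module.Dual k V)) (i : ι) :
    dualToPoly b (b i) = MvPolynomial.X i := by
  rw [dualToPoly_eq]
  simp [dualToPolyL]

lemma dualToPoly_eq_zero (b : Module.Basis ι k (Module.Dual k V)) {φ : Module.Dual k V}
    (h : dualToPoly b φ = 0) : φ = 0 := by
  rw [dualToPoly_eq, dualToPolyL] at h
  have hli := MvPolynomial.linearIndependent_X ι k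
  have := linearIndependent_iff.mp hli (b.repr φ) h
  simpa using congrArg b.repr.symm this

lemma polyAut_X (b : Module.Basis ι k (Module.Dual k V)) (s : V →ₗ[k] V) (i : ι) :
    polyAut b s (MvPolynomial.X i) = dualToPoly b (s.dualMap (b i)) :=
  MvPolynomial.aeval_X _ i

lemma polyAut_dualToPoly (b : Module.Basis ι k (Module.Dual k V)) (s : V →ₗ[k] V)
    (φ : Module.Dual k V) :
    polyAut b s (dualToPoly b φ) = dualToPoly b (s.dualMap φ) := by
  have h : (polyAut b s).toLinearMap ∘ₗ dualToPolyL b = dualToPolyL b ∘ₗ s.dualMap := by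
    apply b.ext
    intro i
    simp only [LinearMap.comp_apply, AlgHom.toLinearMap_apply, ← dualToPoly_eq,
      dualToPoly_basis, polyAut_X]
  rw [dualToPoly_eq, dualToPoly_eq]
  exact DFunLike.congr_fun h φ


variable {s : V →ₗ[k] V}

lemma sdual_sdual (hs : s ∘ₗ s = LinearMap.id) (φ : Module.Dual k V) :
    s.dualMap (s.dualMap φ) = φ := by
  ext v
  have : s (s v) = v := by
    have := congrArg (fun f => f v) hs
    simpa using this
  simp [LinearMap.dualMap_apply, this]

lemma polyAut_polyAut (b : Module.Basis ι k (Module.Dual k V)) (hs : s ∘ₗ s = LinearMap.id)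
    (f : MvPolynomial ι k) : polyAut b s (polyAut b s f) = f := by
  have h : (polyAut b s).comp (polyAut b s) = AlgHom.id k (MvPolynomial ι k) := by
    apply MvPolynomial.algHom_ext
    intro i
    simp [polyAut_X, polyAut_dualToPoly, sdual_sdual hs, dualToPoly_basis]
  exact DFunLike.congr_fun h f

variable {α : Module.Dual k V}

lemma sdual_alpha (hs : s ∘ₗ s = LinearMap.id)
    (hker : LinearMap.ker α = LinearMap.ker (s - LinearMap.id)) :
    s.dualMap α = -α := by
  ext v
  have hmem : s v + v ∈ LinearMap.ker (s - LinearMap.id) := by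
    have : s (s v) = v := by
      have := congrArg (fun f => f v) hs
      simpa using this
    rw [LinearMap.mem_ker, LinearMap.sub_apply, LinearMap.id_apply, map_add, this]
    abel
  rw [← hker] at hmem
  have : α (s v + v) = 0 := hmem
  rw [map_add] at this
  simp only [LinearMap.dualMap_apply, LinearMap.neg_apply]
  linear_combination this

lemma anti_smul (hchar : (2 : k) ≠ 0) (hα : α ≠ 0)
    (hker : LinearMap.ker α = LinearMap.ker (s - LinearMap.id))
    {ψ : Module.Dual k V} (hψ : s.dualMap ψ = -ψ) : ∃ c : k, ψ = c • α := by
  obtain ⟨v0, hv0⟩ : ∃ v, α v ≠ 0 := by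
    by_contra h
    push_neg at h
    exact hα (by ext v; simp [h v])
  have hker' : ∀ w, α w = 0 → ψ w = 0 := by
    intro w hw
    have hw' : w ∈ LinearMap.ker (s - LinearMap.id) := hker ▸ LinearMap.mem_ker.mpr hw
    have hsw : s w = w := by
      have := LinearMap.mem_ker.mp hw'
      simpa [sub_eq_zero] using this
    have h1 : ψ (s w) = -ψ w := by
      have := congrArg (fun f => f w) hψ
      simpa [LinearMap.dualMap_apply] using this
    rw [hsw] at h1
    have h2 : (2 : k) * ψ w = 0 := by linear_combination h1
    exact (mul_eq_zero.mp h2).resolve_left hchar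
  refine ⟨ψ v0 / α v0, ?_⟩
  ext v
  have h1 : α (v - (α v / α v0) • v0) = 0 := by
    simp [map_sub, map_smul]
    field_simp
    ring
  have h2 := hker' _ h1
  rw [map_sub, map_smul, sub_eq_zero] at h2
  simp only [LinearMap.smul_apply, smul_eq_mul]
  rw [h2]
  simp [smul_eq_mul]
  ring

lemma polyAut_sub_mem (b : Module.Basis ι k (Module.Dual k V)) (hchar : (2 : k) ≠ 0)
    (hs : s ∘ₗ s = LinearMap.id) (hα : α ≠ 0)
    (hker : LinearMap.ker α = LinearMap.ker (s - LinearMap.id))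
    (f : MvPolynomial ι k) :
    polyAut b s f - f ∈ Ideal.span {dualToPoly b α} := by
  set P := dualToPoly b α with hP
  set I := Ideal.span {P} with hI
  have hPmem : P ∈ I := Ideal.subset_span rfl
  induction f using MvPolynomial.induction_on with
  | C c => simp [polyAut, MvPolynomial.aeval_C, MvPolynomial.algebraMap_eq]
  | add f g hf hg => simpa [map_add, add_sub_add_comm] using I.add_mem hf hg
  | mul_X f i hf =>
    have h1 : polyAut b s (MvPolynomial.X i) - MvPolynomial.X i ∈ I := by
      set ψ := s.dualMap (b i) - b i with hψdef
      have hψ : s.dualMap ψ = -ψ := by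
        rw [hψdef, map_sub, sdual_sdual hs]
        abel
      obtain ⟨c, hc⟩ := anti_smul hchar hα hker hψ
      have heq : polyAut b s (MvPolynomial.X i) - MvPolynomial.X i = dualToPoly b ψ := by
        rw [polyAut_X, ← dualToPoly_basis b i, hψdef]
        simp only [dualToPoly_eq, map_sub]
      rw [heq, hc, dualToPoly_eq, map_smul, ← dualToPoly_eq, ← hP,
        MvPolynomial.smul_eq_C_mul]
      exact I.mul_mem_left _ hPmem
    have key : polyAut b s (f * MvPolynomial.X i) - f * MvPolynomial.X i =
        polyAut b s f * (polyAut b s (MvPolynomial.X i) - MvPolynomial.X i) +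
          (polyAut b s f - f) * MvPolynomial.X i := by
      rw [map_mul]; ring
    rw [key]
    exact I.add_mem (I.mul_mem_left _ h1) (I.mul_mem_right _ hf)

lemma polyAut_P (b : Module.Basis ι k (Module.Dual k V)) (hs : s ∘ₗ s = LinearMap.id)
    (hker : LinearMap.ker α = LinearMap.ker (s - LinearMap.id)) :
    polyAut b s (dualToPoly b α) = -dualToPoly b α := by
  rw [polyAut_dualToPoly, sdual_alpha hs hker, dualToPoly_eq, map_neg, ← dualToPoly_eq]

lemma anti_factor (b : Module.Basis ι k (Module.Dual k V)) (hchar : (2 : k) ≠ 0)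
    (hs : s ∘ₗ s = LinearMap.id) (hα : α ≠ 0)
    (hker : LinearMap.ker α = LinearMap.ker (s - LinearMap.id))
    {f : MvPolynomial ι k} (hf : polyAut b s f = -f) :
    ∃ g, f = dualToPoly b α * g ∧ polyAut b s g = g := by
  set P := dualToPoly b α with hP
  have h2 : polyAut b s f - f ∈ Ideal.span {P} := polyAut_sub_mem b hchar hs hα hker f
  rw [hf] at h2
  have h2ne : (-2 : k) ≠ 0 := neg_ne_zero.mpr hchar
  have hmem : f ∈ Ideal.span {P} := by
    have e1 : (-2 : k) • f = -f - f := by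
      rw [neg_smul, two_smul]
      abel
    have heq : f = MvPolynomial.C (-2 : k)⁻¹ * (-f - f) := by
      rw [← MvPolynomial.smul_eq_C_mul, ← e1, smul_smul, inv_mul_cancel₀ h2ne, one_smul]
    rw [heq]
    exact Ideal.mul_mem_left _ _ h2
  rw [Ideal.mem_span_singleton] at hmem
  obtain ⟨g, hg⟩ := hmem
  refine ⟨g, hg, ?_⟩
  have hPneg : polyAut b s P = -P := polyAut_P b hs hker
  have hP0 : P ≠ 0 := fun h => hα (dualToPoly_eq_zero b h)
  have h3 := hf
  rw [hg, map_mul, hPneg] at h3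
  have h4 : P * polyAut b s g = P * g := by
    linear_combination -h3
  exact mul_left_cancel₀ hP0 h4

end Aux


set_option maxHeartbeats 1000000 in
set_option synthInstance.maxHeartbeats 400000 in
open Aux in
/-- The `A`-linear map `A ⊗_{A^s} A → A × A` determined by `x ⊗ y ↦ (x·y, x·s(y))`
is injective. -/
theorem tensor_to_prod_injective
    {k : Type*} [Field k] (hchar : (2 : k) ≠ 0)
    {V : Type*} [AddCommGroup V] [Module k V] [FiniteDimensional k V]
    (s : V →ₗ[k] V) (hs : s ∘ₗ s = LinearMap.id)
    (hhyp : Module.finrank k (LinearMap.ker (s - LinearMap.id)) + 1 = Module.finrank k V)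
    (α : Module.Dual k V) (hα : α ≠ 0)
    (hker : LinearMap.ker α = LinearMap.ker (s - LinearMap.id))
    {ι : Type*} (b : Module.Basis ι k (Module.Dual k V))
    (Φ : MvPolynomial ι k ⊗[invariantSub b s] MvPolynomial ι k →ₗ[MvPolynomial ι k]
          MvPolynomial ι k × MvPolynomial ι k)
    (hΦ : ∀ x y : MvPolynomial ι k,
      Φ (x ⊗ₜ[invariantSub b s] y) = (x * y, x * polyAut b s y)) :
    Function.Injective Φ := by
  set P : MvPolynomial ι k := dualToPoly b α with hPdef
  have hP0 : P ≠ 0 := fun h => hα (dualToPoly_eq_zero b h)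
  have hPneg : polyAut b s P = -P := polyAut_P b hs hker
  -- every tensor is a ⊗ 1 + c ⊗ P
  have hrep : ∀ t : MvPolynomial ι k ⊗[invariantSub b s] MvPolynomial ι k, ∃ a c : MvPolynomial ι k, t = a ⊗ₜ[invariantSub b s] (1 : MvPolynomial ι k) + c ⊗ₜ[invariantSub b s] P := by
    intro t
    induction t using TensorProduct.induction_on with
    | zero => exact ⟨0, 0, by simp⟩
    | tmul x y =>
      set u : MvPolynomial ι k := (2 : k)⁻¹ • (y + polyAut b s y) with hu
      set w : MvPolynomial ι k := (2 : k)⁻¹ • (y - polyAut b s y) with hw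
      have hy : y = u + w := by
        rw [hu, hw, ← smul_add]
        have e : (y + polyAut b s y) + (y - polyAut b s y) = (2 : k) • y := by
          rw [two_smul]; abel
        rw [e, smul_smul, inv_mul_cancel₀ hchar, one_smul]
      have hσu : polyAut b s u = u := by
        rw [hu, map_smul, map_add, polyAut_polyAut b hs]
        rw [add_comm]
      have hσw : polyAut b s w = -w := by
        rw [hw, map_smul, map_sub, polyAut_polyAut b hs, ← smul_neg]
        congr 1
        abel
      obtain ⟨g, hg, hσg⟩ := anti_factor b hchar hs hα hker hσw
      have hu_mem : u ∈ invariantSub b s := hσu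
      have hg_mem : g ∈ invariantSub b s := hσg
      refine ⟨u * x, g * x, ?_⟩
      rw [hy, hg, TensorProduct.tmul_add]
      congr 1
      · calc x ⊗ₜ[invariantSub b s] u = x ⊗ₜ[invariantSub b s] ((⟨u, hu_mem⟩ : invariantSub b s) • (1 : MvPolynomial ι k)) := by
              congr 1
              simp [Subalgebra.smul_def, smul_eq_mul]
          _ = ((⟨u, hu_mem⟩ : invariantSub b s) • x) ⊗ₜ[invariantSub b s] (1 : MvPolynomial ι k) := by
              rw [TensorProduct.tmul_smul, TensorProduct.smul_tmul']
          _ = (u * x) ⊗ₜ[invariantSub b s] (1 : MvPolynomial ι k) := by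
              congr 1
      · calc x ⊗ₜ[invariantSub b s] (P * g) = x ⊗ₜ[invariantSub b s] ((⟨g, hg_mem⟩ : invariantSub b s) • P) := by
              congr 1
              simp [Subalgebra.smul_def, smul_eq_mul, mul_comm]
          _ = ((⟨g, hg_mem⟩ : invariantSub b s) • x) ⊗ₜ[invariantSub b s] P := by
              rw [TensorProduct.tmul_smul, TensorProduct.smul_tmul']
          _ = (g * x) ⊗ₜ[invariantSub b s] P := by
              congr 1
    | add t1 t2 h1 h2 =>
      obtain ⟨a1, c1, e1⟩ := h1
      obtain ⟨a2, c2, e2⟩ := h2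
      exact ⟨a1 + a2, c1 + c2, by
        rw [e1, e2, TensorProduct.add_tmul, TensorProduct.add_tmul]; abel⟩
  -- kernel is trivial
  have hker0 : ∀ t, Φ t = 0 → t = 0 := by
    intro t ht
    obtain ⟨a, c, rfl⟩ := hrep t
    rw [map_add, hΦ, hΦ, map_one, hPneg] at ht
    have h1 : a * 1 + c * P = 0 := congrArg Prod.fst ht
    have h2 : a * 1 + c * -P = 0 := congrArg Prod.snd ht
    rw [mul_one] at h1 h2
    have hC2 : (MvPolynomial.C (2 : k) : MvPolynomial ι k) ≠ 0 := by
      simpa using hchar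
    have ha : a = 0 := by
      have : MvPolynomial.C (2 : k) * a = 0 := by
        rw [← MvPolynomial.smul_eq_C_mul, two_smul]
        linear_combination h1 + h2
      exact (mul_eq_zero.mp this).resolve_left hC2
    have hcP : c * P = 0 := by
      have : MvPolynomial.C (2 : k) * (c * P) = 0 := by
        rw [← MvPolynomial.smul_eq_C_mul, two_smul]
        linear_combination h1 - h2
      exact (mul_eq_zero.mp this).resolve_left hC2
    have hc : c = 0 := (mul_eq_zero.mp hcP).resolve_right hP0
    rw [ha, hc]
    simp
  intro t1 t2 h12
  have : Φ (t1 - t2) = 0 := by rw [map_sub, h12, sub_self]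
  have := hker0 _ this
  exact sub_eq_zero.mp this
end
end

section
/- The map ε_s : A → A^s is A^s-linear, for every a ∈ A one has a = ε_s(a·α_s)·1 + ε_s(a)·α_s, and the A^s-bilinear pairing A × A → A^s, (a, b) ↦ ε_s(a·b), is perfect: the induced A^s-linear map A → Hom_{A^s}(A, A^s), a ↦ (b ↦ ε_s(ab)), is bijective. (Thus A is a Frobenius extension of A^s with Frobenius form ε_s and dual bases {1, α_s} and {α_s, 1}.) -/
set_option synthInstance.maxHeartbeats 1000000
set_option maxHeartbeats 1000000

open scoped TensorProduct

noncomputable section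

namespace FrobAux

variable {k V : Type*} [Field k] [AddCommGroup V] [Module k V] {ι : Type*}
  (b : Module.Basis ι k (Module.Dual k V))

/-- `dualToPoly` as a linear map. -/
def D : Module.Dual k V →ₗ[k] MvPolynomial ι k :=
  (Finsupp.linearCombination k MvPolynomial.X) ∘ₗ (b.repr.toLinearMap)

lemma dualToPoly_eq (φ : Module.Dual k V) : dualToPoly b φ = D b φ := by
  rw [D, LinearMap.comp_apply, LinearEquiv.coe_coe, Finsupp.linearCombination_apply]
  exact Finsupp.sum_congr fun i _ => (MvPolynomial.smul_eq_C_mul _ _).symm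

lemma D_basis (i : ι) : D b (b i) = MvPolynomial.X i := by
  simp [D]

lemma polyAut_D (s : V →ₗ[k] V) :
    (polyAut b s).toLinearMap ∘ₗ D b = D b ∘ₗ s.dualMap := by
  refine b.ext fun i => ?_
  rw [LinearMap.comp_apply, LinearMap.comp_apply, AlgHom.toLinearMap_apply, D_basis,
    polyAut, MvPolynomial.aeval_X, dualToPoly_eq]

lemma polyAut_dualToPoly (s : V →ₗ[k] V) (φ : Module.Dual k V) :
    polyAut b s (dualToPoly b φ) = dualToPoly b (s.dualMap φ) := by
  rw [dualToPoly_eq, dualToPoly_eq]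
  exact LinearMap.congr_fun (polyAut_D b s) φ

variable {s : V →ₗ[k] V}

lemma polyAut_polyAut (hs : s ∘ₗ s = LinearMap.id) (f : MvPolynomial ι k) :
    polyAut b s (polyAut b s f) = f := by
  have hsv : ∀ v, s (s v) = v := fun v => by
    simpa using LinearMap.congr_fun hs v
  have key : (polyAut b s).comp (polyAut b s) = AlgHom.id k (MvPolynomial ι k) := by
    apply MvPolynomial.algHom_ext
    intro i
    rw [AlgHom.comp_apply, AlgHom.id_apply]
    have h1 : (MvPolynomial.X i : MvPolynomial ι k) = dualToPoly b (b i) := by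
      rw [dualToPoly_eq, D_basis]
    rw [h1, polyAut_dualToPoly, polyAut_dualToPoly]
    have h2 : s.dualMap (s.dualMap (b i)) = b i := by
      ext v; simp [LinearMap.dualMap_apply, hsv v]
    rw [h2]
  exact AlgHom.congr_fun key f

variable {α : Module.Dual k V}

lemma dualMap_alpha (hs : s ∘ₗ s = LinearMap.id)
    (hker : LinearMap.ker α = LinearMap.ker (s - LinearMap.id)) :
    s.dualMap α = -α := by
  have hsv : ∀ v, s (s v) = v := fun v => by
    simpa using LinearMap.congr_fun hs v
  ext v
  have hmem : s v + v ∈ LinearMap.ker α := by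
    rw [hker, LinearMap.mem_ker, LinearMap.sub_apply, LinearMap.id_apply, map_add, hsv v]
    abel
  have h0 : α (s v) + α v = 0 := by
    rw [← map_add]; exact LinearMap.mem_ker.1 hmem
  rw [LinearMap.dualMap_apply, LinearMap.neg_apply, eq_neg_iff_add_eq_zero]
  exact h0

lemma dualToPoly_ne_zero (hα : α ≠ 0) : dualToPoly b α ≠ 0 := by
  obtain ⟨v, hv⟩ : ∃ v, α v ≠ 0 := by
    by_contra h
    push_neg at h
    exact hα (by ext v; simp [h v])
  intro h0
  have key : (MvPolynomial.aeval (fun i => b i v) : MvPolynomial ι k →ₐ[k] k).toLinearMap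
      ∘ₗ D b = LinearMap.applyₗ v ∘ₗ LinearMap.id := by
    refine b.ext fun i => ?_
    simp [D_basis]
  have := LinearMap.congr_fun key α
  rw [LinearMap.comp_apply, ← dualToPoly_eq, h0] at this
  simp at this
  exact hv this.symm

lemma sub_mem_span [FiniteDimensional k V]
    (hker : LinearMap.ker α = LinearMap.ker (s - LinearMap.id)) (f : MvPolynomial ι k) :
    polyAut b s f - f ∈ Ideal.span {dualToPoly b α} := by
  set I := Ideal.span {dualToPoly b α} with hI
  suffices h : (Ideal.Quotient.mkₐ k I).comp (polyAut b s) = Ideal.Quotient.mkₐ k I by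
    have := AlgHom.congr_fun h f
    simp only [AlgHom.comp_apply, Ideal.Quotient.mkₐ_eq_mk] at this
    rwa [Ideal.Quotient.mk_eq_mk_iff_sub_mem] at this
  apply MvPolynomial.algHom_ext
  intro i
  simp only [AlgHom.comp_apply, Ideal.Quotient.mkₐ_eq_mk]
  rw [Ideal.Quotient.mk_eq_mk_iff_sub_mem]
  have h1 : polyAut b s (MvPolynomial.X i) - MvPolynomial.X i
      = D b (s.dualMap (b i) - b i) := by
    rw [map_sub, D_basis, ← dualToPoly_eq, polyAut, MvPolynomial.aeval_X]
  rw [h1]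
  obtain ⟨c, hc⟩ : ∃ c : k, s.dualMap (b i) - b i = c • α := by
    have hsub : LinearMap.ker α ≤ LinearMap.ker (s.dualMap (b i) - b i) := by
      intro v hv
      rw [hker, LinearMap.mem_ker, LinearMap.sub_apply, LinearMap.id_apply,
        sub_eq_zero] at hv
      rw [LinearMap.mem_ker, LinearMap.sub_apply, LinearMap.dualMap_apply, hv, sub_self]
    have hmem := FiniteDimensional.mem_span_of_iInf_ker_le_ker
      (L := fun _ : Unit => α) (K := s.dualMap (b i) - b i) (by rwa [iInf_const])
    rw [Set.range_const] at hmem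
    obtain ⟨c, hc⟩ := Submodule.mem_span_singleton.1 hmem
    exact ⟨c, hc.symm⟩
  rw [hc, map_smul, ← dualToPoly_eq, MvPolynomial.smul_eq_C_mul]
  exact Ideal.mul_mem_left _ _ (Ideal.subset_span (Set.mem_singleton _))

lemma decomp [FiniteDimensional k V] (hchar : (2 : k) ≠ 0)
    (hs : s ∘ₗ s = LinearMap.id) (hα : α ≠ 0)
    (hker : LinearMap.ker α = LinearMap.ker (s - LinearMap.id)) (a : MvPolynomial ι k) :
    ∃ g h : MvPolynomial ι k, polyAut b s g = g ∧ polyAut b s h = h ∧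
      a = g + h * dualToPoly b α := by
  set σ := polyAut b s with hσ
  set p := dualToPoly b α with hp
  set c : k := 2⁻¹ with hcdef
  have hc2 : c * 2 = 1 := inv_mul_cancel₀ hchar
  set g := c • (a + σ a) with hg
  set t := c • (a - σ a) with ht
  have hσg : σ g = g := by
    rw [hg, map_smul, map_add, polyAut_polyAut b hs, add_comm]
  have hσt : σ t = -t := by
    rw [ht, map_smul, map_sub, polyAut_polyAut b hs, ← smul_neg, neg_sub]
  have hσp : σ p = -p := by
    rw [hp, hσ, polyAut_dualToPoly, dualMap_alpha hs hker, dualToPoly_eq, map_neg,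
      ← dualToPoly_eq]
  have htI : t ∈ Ideal.span {p} := by
    have h2t : σ t - t ∈ Ideal.span {p} := sub_mem_span b hker t
    rw [hσt] at h2t
    have key : (-c) • (-t - t) = t := by
      rw [show -t - t = (-2 : k) • t from by rw [neg_smul, two_smul]; abel,
        smul_smul, neg_mul_neg, hc2, one_smul]
    rw [← key, MvPolynomial.smul_eq_C_mul]
    exact Ideal.mul_mem_left _ _ h2t
  obtain ⟨h, hh⟩ := Ideal.mem_span_singleton'.1 htI
  have hσh : σ h = h := by
    have e1 := congrArg σ hh
    rw [map_mul, hσp, hσt, ← hh, mul_neg, neg_inj] at e1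
    exact mul_right_cancel₀ (dualToPoly_ne_zero b hα) e1
  refine ⟨g, h, hσg, hσh, ?_⟩
  have hgt : g + t = a := by
    rw [hg, ht, ← smul_add,
      show a + σ a + (a - σ a) = (2 : k) • a from by rw [two_smul]; abel,
      smul_smul, hc2, one_smul]
  rw [hh, hgt]

end FrobAux

/-- Frobenius structure: the map `ε_s : A → A^s`, `g + h·α_s ↦ h` (for `g, h ∈ A^s`),
is `A^s`-linear; for every `a ∈ A` one has `a = ε_s(a·α_s)·1 + ε_s(a)·α_s`; and the
`A^s`-bilinear pairing `(a, b) ↦ ε_s(a·b)` is perfect: the induced map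
`A → Hom_{A^s}(A, A^s)`, `a ↦ (b ↦ ε_s(a·b))`, is bijective. Thus `A` is a Frobenius
extension of `A^s` with Frobenius form `ε_s` and dual bases `{1, α_s}`, `{α_s, 1}`. -/
theorem frobenius_form_of_invariants
    {k : Type*} [Field k] (hchar : (2 : k) ≠ 0)
    {V : Type*} [AddCommGroup V] [Module k V] [FiniteDimensional k V]
    (s : V →ₗ[k] V) (hs : s ∘ₗ s = LinearMap.id)
    (hhyp : Module.finrank k (LinearMap.ker (s - LinearMap.id)) + 1 = Module.finrank k V)
    (α : Module.Dual k V) (hα : α ≠ 0)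
    (hker : LinearMap.ker α = LinearMap.ker (s - LinearMap.id))
    {ι : Type*} (b : Module.Basis ι k (Module.Dual k V))
    (ε : MvPolynomial ι k → invariantSub b s)
    (hε : ∀ g h : invariantSub b s,
      ε ((g : MvPolynomial ι k) + (h : MvPolynomial ι k) * dualToPoly b α) = h) :
    (∀ a a' : MvPolynomial ι k, ε (a + a') = ε a + ε a') ∧
    (∀ (c : invariantSub b s) (a : MvPolynomial ι k),
      ε ((c : MvPolynomial ι k) * a) = c * ε a) ∧
    (∀ a : MvPolynomial ι k,
      a = (ε (a * dualToPoly b α) : MvPolynomial ι k) * 1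
        + (ε a : MvPolynomial ι k) * dualToPoly b α) ∧
    (∀ L : MvPolynomial ι k →ₗ[invariantSub b s] invariantSub b s,
      ∃! a : MvPolynomial ι k, ∀ x : MvPolynomial ι k, L x = ε (a * x)) := by
  classical
  set p := dualToPoly b α with hp
  have hσp : polyAut b s p = -p := by
    rw [hp, FrobAux.polyAut_dualToPoly, FrobAux.dualMap_alpha hs hker,
      FrobAux.dualToPoly_eq, map_neg, ← FrobAux.dualToPoly_eq]
  have pp_mem : p * p ∈ invariantSub b s := by
    show polyAut b s (p * p) = (AlgHom.id k _) (p * p)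
    rw [map_mul, hσp, AlgHom.id_apply, neg_mul_neg]
  have dec : ∀ a : MvPolynomial ι k, ∃ G H : invariantSub b s,
      a = (G : MvPolynomial ι k) + (H : MvPolynomial ι k) * p := by
    intro a
    obtain ⟨g, h, hg, hh, e⟩ := FrobAux.decomp b hchar hs hα hker a
    exact ⟨⟨g, hg⟩, ⟨h, hh⟩, e⟩
  have key3 : ∀ a : MvPolynomial ι k,
      a = (ε (a * p) : MvPolynomial ι k) * 1 + (ε a : MvPolynomial ι k) * p := by
    intro a
    obtain ⟨G, H, ea⟩ := dec a
    have h1 : ((G : MvPolynomial ι k) + (H : MvPolynomial ι k) * p) * p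
        = ((H * ⟨p * p, pp_mem⟩ : invariantSub b s) : MvPolynomial ι k)
          + (G : MvPolynomial ι k) * p := by push_cast; ring
    rw [ea, h1, hε, hε, mul_one]
  refine ⟨?_, ?_, key3, ?_⟩
  · intro a a'
    obtain ⟨G, H, ea⟩ := dec a
    obtain ⟨G', H', ea'⟩ := dec a'
    rw [ea, ea',
      show ((G : MvPolynomial ι k) + (H : MvPolynomial ι k) * p)
          + ((G' : MvPolynomial ι k) + (H' : MvPolynomial ι k) * p)
        = ((G + G' : invariantSub b s) : MvPolynomial ι k)
          + ((H + H' : invariantSub b s) : MvPolynomial ι k) * p from by push_cast; ring,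
      hε, hε, hε]
  · intro c a
    obtain ⟨G, H, ea⟩ := dec a
    rw [ea,
      show (c : MvPolynomial ι k) * ((G : MvPolynomial ι k) + (H : MvPolynomial ι k) * p)
        = ((c * G : invariantSub b s) : MvPolynomial ι k)
          + ((c * H : invariantSub b s) : MvPolynomial ι k) * p from by push_cast; ring,
      hε, hε]
  · intro L
    have smul_eq : ∀ (G : invariantSub b s) (x : MvPolynomial ι k),
        G • x = (G : MvPolynomial ι k) * x := fun G x => rfl
    refine ⟨(L p : MvPolynomial ι k) + (L 1 : MvPolynomial ι k) * p, fun x => ?_, ?_⟩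
    · obtain ⟨G, H, ex⟩ := dec x
      have hx : x = G • (1 : MvPolynomial ι k) + H • p := by
        rw [ex, smul_eq, smul_eq, mul_one]
      have hLx : L x = G * L 1 + H * L p := by
        rw [hx, map_add, map_smul, map_smul, smul_eq_mul, smul_eq_mul]
      have h2 : ((L p : MvPolynomial ι k) + (L 1 : MvPolynomial ι k) * p)
          * ((G : MvPolynomial ι k) + (H : MvPolynomial ι k) * p)
          = ((L p * G + L 1 * (H * ⟨p * p, pp_mem⟩) : invariantSub b s) : MvPolynomial ι k)
            + ((G * L 1 + H * L p : invariantSub b s) : MvPolynomial ι k) * p := by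
        push_cast; ring
      rw [hLx, ex, h2, hε]
    · intro a' ha'
      have e1 : ε (a' * p) = L p := (ha' p).symm
      have e2 : ε a' = L 1 := by rw [← mul_one a']; exact (ha' 1).symm
      rw [key3 a', e1, e2, mul_one]
end
end

section
/- Let k be a field and i ≥ 2 an integer. Consider the set Z⁰ of tuples consisting of: a column vector v = (a_i, c_i) ∈ k²; 2×2 matrices M_r = [[a_r, b_r],[c_r, d_r]] over k for each r with 2 ≤ r ≤ i−1; and a row vector w = (c_1, d_1) ∈ k²; such that all entries occurring (a_i, c_i, the a_r, b_r, c_r, d_r for 2 ≤ r ≤ i−1, and c_1, d_1) are nonzero, and all consecutive products vanish: M_{i−1}·v = 0, M_r·M_{r+1} = 0 for 2 ≤ r ≤ i−2, and w·M_2 = 0 (when i = 2 the only condition is w·v = 0). Then the map Z⁰ → (k^×)^{2i−1} sending such a tuple to (a_i, c_i, a_{i−1}, c_{i−1}, …, a_2, c_2, c_1) is a bijection. Consequently, the group (k^×)^{2i} acting by rescaling the 2i coordinate lines (i.e., simultaneously rescaling the corresponding rows and columns of the matrices and vectors) acts transitively on Z⁰. -/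
noncomputable section

/-- The data of a would-be complex `0 → D → D² → ⋯ → D² → D → 0` with `i + 1` terms:
`v = (a_i, c_i)` is the first differential (a column vector), `M j` (for `j : Fin (i-2)`)
encodes the `2 × 2` matrix `M_{j+2} = [[a_{j+2}, b_{j+2}], [c_{j+2}, d_{j+2}]]`, and
`w = (c_1, d_1)` is the last differential (a row vector). -/
structure ComplexData (k : Type*) (i : ℕ) where
  v : k × k
  M : Fin (i - 2) → (k × k) × (k × k)
  w : k × k

/-- The chain of differentials of `x : ComplexData k i`, encoded uniformly as `2 × 2`
matrices: `chain i x r = M_r` for `2 ≤ r ≤ i - 1`, while the column vector `v` (at `r = i`)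
and the row vector `w` (at `r = 1`) are padded by zeros. Then `x` defines a complex iff
`chain i x r * chain i x (r + 1) = 0` for `1 ≤ r ≤ i - 1`. -/
def chain {k : Type*} [Field k] (i : ℕ) (x : ComplexData k i) (r : ℕ) :
    Matrix (Fin 2) (Fin 2) k :=
  if r = 1 then !![x.w.1, x.w.2; 0, 0]
  else if r = i then !![x.v.1, 0; x.v.2, 0]
  else if h : 2 ≤ r ∧ r ≤ i - 1 then
    !![(x.M ⟨r - 2, by omega⟩).1.1, (x.M ⟨r - 2, by omega⟩).1.2;
       (x.M ⟨r - 2, by omega⟩).2.1, (x.M ⟨r - 2, by omega⟩).2.2]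
  else 0

/-- The set `Z⁰`: complexes all of whose coefficients are nonzero. -/
def Z0 (k : Type*) [Field k] (i : ℕ) : Type _ :=
  { x : ComplexData k i //
      (x.v.1 ≠ 0 ∧ x.v.2 ≠ 0) ∧
      (∀ j, (x.M j).1.1 ≠ 0 ∧ (x.M j).1.2 ≠ 0 ∧ (x.M j).2.1 ≠ 0 ∧ (x.M j).2.2 ≠ 0) ∧
      (x.w.1 ≠ 0 ∧ x.w.2 ≠ 0) ∧
      (∀ r, 1 ≤ r → r + 1 ≤ i → chain i x r * chain i x (r + 1) = 0) }

/-- The projection `Z⁰ → (kˣ)^{2i-1}` recording `(a_i, c_i)`, the `(a_r, c_r)` for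
`2 ≤ r ≤ i - 1`, and `c_1`. -/
def projZ0 {k : Type*} [Field k] (i : ℕ) (x : Z0 k i) :
    (kˣ × kˣ) × (Fin (i - 2) → kˣ × kˣ) × kˣ :=
  ((Units.mk0 x.1.v.1 x.2.1.1, Units.mk0 x.1.v.2 x.2.1.2),
   fun j => (Units.mk0 (x.1.M j).1.1 (x.2.2.1 j).1,
             Units.mk0 (x.1.M j).2.1 (x.2.2.1 j).2.2.1),
   Units.mk0 x.1.w.1 x.2.2.2.1.1)

/-!
In a complex in `Z⁰` every differential has rank one: the vanishing of
`M_r · (a_{r+1}, c_{r+1})ᵀ` forces `b_r = -a_r a_{r+1} / c_{r+1}` and `d_r = -c_r a_{r+1} / c_{r+1}`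
(and likewise `d_1 = -c_1 a_2 / c_2`), so a point of `Z⁰` is determined by its coefficients
`a_r, c_r, c_1`. This is injectivity.

Rescaling the coordinate lines conjugates every differential by diagonal matrices, so it preserves
`Z⁰`, and it acts on the recorded coefficients by an explicit formula. That action is transitive
on `(kˣ)^{2i-1}`: the scalars are found by solving a triangular system from the top level down.
Applied to a single point of `Z⁰` this gives surjectivity, and combined with injectivity it gives
transitivity on `Z⁰`.
-/

section

variable {k : Type*} [Field k] {i : ℕ}

namespace Matrix

theorem diagonal_conj_mul_diagonal_conj {n R : Type*} [Fintype n] [DecidableEq n] [Semiring R]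
    (a b c : n → Rˣ) (A B : Matrix n n R) :
    diagonal (fun p => (a p : R)) * A * diagonal (fun p => (((b p)⁻¹ : Rˣ) : R)) *
        (diagonal (fun p => (b p : R)) * B * diagonal (fun p => (((c p)⁻¹ : Rˣ) : R))) =
      diagonal (fun p => (a p : R)) * (A * B) * diagonal (fun p => (((c p)⁻¹ : Rˣ) : R)) := by
  have hb : diagonal (fun p => (((b p)⁻¹ : Rˣ) : R)) * diagonal (fun p => (b p : R)) = 1 := by
    simp [diagonal_mul_diagonal]
  simp only [Matrix.mul_assoc]
  rw [← Matrix.mul_assoc (diagonal _) (diagonal _), hb, Matrix.one_mul]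

end Matrix

/-- Tuples `((a_i, c_i), (j ↦ (a_{j+2}, c_{j+2})), c_1)`, as recorded by `projZ0`. -/
abbrev Coeffs (G : Type*) (i : ℕ) : Type _ := (G × G) × (Fin (i - 2) → G × G) × G

namespace Coeffs

variable {G : Type*}

/-- The pair `(a_r, c_r)` for `2 ≤ r ≤ i`. -/
def level (d : Coeffs G i) (r : ℕ) : G × G :=
  if h : 2 ≤ r ∧ r ≤ i - 1 then d.2.1 ⟨r - 2, by omega⟩ else d.1

theorem level_self (d : Coeffs G i) : d.level i = d.1 :=
  dif_neg (by omega)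

theorem level_fin_add_two (d : Coeffs G i) (j : Fin (i - 2)) :
    d.level (j + 2) = d.2.1 j := by
  have hj := j.2
  rw [level, dif_pos (by omega)]
  simp only [Nat.add_sub_cancel, Fin.eta]

def rescale [CommGroup G] (t u : G) (μ : ℕ → G × G) (d : Coeffs G i) : Coeffs G i :=
  (((μ (i - 1)).1 * d.1.1 * t⁻¹, (μ (i - 1)).2 * d.1.2 * t⁻¹),
   fun j => ((μ (j + 1)).1 * (d.2.1 j).1 * (μ (j + 2)).1⁻¹,
             (μ (j + 1)).2 * (d.2.1 j).2 * (μ (j + 2)).1⁻¹),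
   u * d.2.2 * (μ 1).1⁻¹)

theorem exists_rescale_eq [CommGroup G] (hi : i ≠ 0) (d e : Coeffs G i) :
    ∃ t u μ, d.rescale t u μ = e := by
  set q : ℕ → G × G := fun s => e.level s / d.level s
  -- `P r`, the scalar on the first line of level `r`, is the product of the `a`-ratios above `r`.
  set P : ℕ → G := fun r => ∏ s ∈ Finset.Ioc r i, (q s).1
  have hP : ∀ r < i, P r = (q (r + 1)).1 * P (r + 1) := fun r hr => by
    simp only [P]
    rw [← Finset.insert_Ioc_add_one_left_eq_Ioc hr, Finset.prod_insert (by simp)]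
  have hP_top : P (i - 1) = e.1.1 / d.1.1 := by
    rw [hP _ (by omega), Nat.sub_add_cancel (by omega)]
    simp [P, q, level_self]
  have hP_fin : ∀ j : Fin (i - 2), P (j + 1) = ((e.2.1 j).1 / (d.2.1 j).1) * P (j + 2) := by
    intro j
    rw [hP _ (by omega)]
    simp [q, level_fin_add_two]
  refine ⟨1, e.2.2 / d.2.2 * P 1, fun r => (P r, (q (r + 1)).2 * P (r + 1)), ?_⟩
  refine Prod.ext (Prod.ext ?_ ?_) (Prod.ext (funext fun j => Prod.ext ?_ ?_) ?_)
  · simp [rescale, hP_top]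
  · simp [rescale, Nat.sub_add_cancel (Nat.one_le_iff_ne_zero.2 hi), P, q, level_self]
  · simp [rescale, hP_fin j, div_eq_mul_inv, mul_comm, mul_assoc, mul_left_comm]
  · simp [rescale, q, level_fin_add_two, div_eq_mul_inv, mul_comm, mul_assoc, mul_left_comm]
  · simp [rescale, div_eq_mul_inv, mul_comm, mul_assoc, mul_left_comm]

end Coeffs

theorem chain_one (x : ComplexData k i) : chain i x 1 = !![x.w.1, x.w.2; 0, 0] := by
  rw [chain, if_pos rfl]

theorem chain_self (hi : i ≠ 1) (x : ComplexData k i) :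
    chain i x i = !![x.v.1, 0; x.v.2, 0] := by
  rw [chain, if_neg hi, if_pos rfl]

theorem chain_fin_add_two (x : ComplexData k i) (j : Fin (i - 2)) :
    chain i x (j + 2) =
      !![(x.M j).1.1, (x.M j).1.2; (x.M j).2.1, (x.M j).2.2] := by
  have hj := j.2
  rw [chain, if_neg (by omega), if_neg (by omega), dif_pos (by omega)]
  simp only [Nat.add_sub_cancel, Fin.eta]

theorem exists_fin_add_two {r : ℕ} (h2 : 2 ≤ r) (hr : r < i) :
    ∃ j : Fin (i - 2), r = j + 2 :=
  ⟨⟨r - 2, by omega⟩, by simp only; omega⟩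

namespace ComplexData

theorem eq_of_chain_eq (hi : 2 ≤ i) {x y : ComplexData k i}
    (h : ∀ r, 1 ≤ r → r ≤ i → chain i x r = chain i y r) : x = y := by
  have hw := h 1 le_rfl (by omega)
  have hv := h i (by omega) le_rfl
  have hM : ∀ j : Fin (i - 2), chain i x (j + 2) = chain i y (j + 2) :=
    fun j => h _ (by omega) (by omega)
  rw [chain_one, chain_one] at hw
  rw [chain_self (by omega), chain_self (by omega)] at hv
  simp only [chain_fin_add_two] at hM
  obtain ⟨⟨xv1, xv2⟩, xM, ⟨xw1, xw2⟩⟩ := x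
  obtain ⟨⟨yv1, yv2⟩, yM, ⟨yw1, yw2⟩⟩ := y
  simp only [EmbeddingLike.apply_eq_iff_eq, Matrix.vecCons_inj, and_true] at hw hv hM
  obtain ⟨rfl, rfl⟩ := hw
  obtain ⟨rfl, rfl⟩ := hv
  obtain rfl : xM = yM := funext fun j => by
    obtain ⟨⟨h11, h12⟩, h21, h22⟩ := hM j
    exact Prod.ext (Prod.ext h11 h12) (Prod.ext h21 h22)
  rfl

/-- `μ r` rescales the two coordinate lines at level `r` (`1 ≤ r ≤ i - 1`), `t` the line at
level `i` and `u` the line at level `0`. -/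
def rescale (t u : kˣ) (μ : ℕ → kˣ × kˣ) (x : ComplexData k i) : ComplexData k i where
  v := (((μ (i - 1)).1 : k) * x.v.1 * ((t⁻¹ : kˣ) : k),
        ((μ (i - 1)).2 : k) * x.v.2 * ((t⁻¹ : kˣ) : k))
  M j :=
    ((((μ ((j : ℕ) + 1)).1 : k) * (x.M j).1.1 * (((μ ((j : ℕ) + 2)).1⁻¹ : kˣ) : k),
      ((μ ((j : ℕ) + 1)).1 : k) * (x.M j).1.2 * (((μ ((j : ℕ) + 2)).2⁻¹ : kˣ) : k)),
     (((μ ((j : ℕ) + 1)).2 : k) * (x.M j).2.1 * (((μ ((j : ℕ) + 2)).1⁻¹ : kˣ) : k),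
      ((μ ((j : ℕ) + 1)).2 : k) * (x.M j).2.2 * (((μ ((j : ℕ) + 2)).2⁻¹ : kˣ) : k)))
  w := ((u : k) * x.w.1 * (((μ 1).1⁻¹ : kˣ) : k),
        (u : k) * x.w.2 * (((μ 1).2⁻¹ : kˣ) : k))

/-- Levels `0` and `i` carry a single coordinate line; the second scalar there is a dummy `1`. -/
def lineScale (i : ℕ) (t u : kˣ) (μ : ℕ → kˣ × kˣ) (r : ℕ) : Fin 2 → kˣ :=
  if r = 0 then ![u, 1] else if r = i then ![t, 1] else ![(μ r).1, (μ r).2]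

theorem chain_rescale (hi : i ≠ 1) (t u : kˣ) (μ : ℕ → kˣ × kˣ) (x : ComplexData k i)
    {r : ℕ} (hr : r < i) :
    chain i (x.rescale t u μ) (r + 1) =
      Matrix.diagonal (fun p => (lineScale i t u μ r p : k)) * chain i x (r + 1) *
        Matrix.diagonal (fun p => (((lineScale i t u μ (r + 1) p)⁻¹ : kˣ) : k)) := by
  by_cases h0 : r = 0
  · subst h0
    rw [chain_one, chain_one]
    ext p q
    fin_cases p <;> fin_cases q <;> simp [lineScale, rescale, show 1 ≠ i by omega]
  by_cases htop : r + 1 = i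
  · subst htop
    rw [chain_self hi, chain_self hi]
    ext p q
    fin_cases p <;> fin_cases q <;> simp [lineScale, rescale, h0]
  · obtain ⟨j, hj⟩ := exists_fin_add_two (i := i) (r := r + 1) (by omega) (by omega)
    rw [hj, chain_fin_add_two, chain_fin_add_two]
    obtain rfl : r = j + 1 := by omega
    ext p q
    fin_cases p <;> fin_cases q <;>
      simp [lineScale, rescale, htop, show (j : ℕ) + 1 ≠ i by omega]

theorem chain_rescale_mul_chain_rescale (t u : kˣ) (μ : ℕ → kˣ × kˣ) {x : ComplexData k i}
    {r : ℕ} (h1 : 1 ≤ r) (h2 : r + 1 ≤ i) (hx : chain i x r * chain i x (r + 1) = 0) :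
    chain i (x.rescale t u μ) r * chain i (x.rescale t u μ) (r + 1) = 0 := by
  obtain ⟨s, rfl⟩ := Nat.exists_eq_add_of_le' h1
  rw [chain_rescale (by omega) _ _ _ _ (by omega), chain_rescale (by omega) _ _ _ _ h2,
    Matrix.diagonal_conj_mul_diagonal_conj, hx, Matrix.mul_zero, Matrix.zero_mul]

def base (k : Type*) [Field k] (i : ℕ) : ComplexData k i :=
  ⟨(1, 1), fun _ => ((1, -1), (1, -1)), (1, -1)⟩

theorem chain_base_mul_chain_base {r : ℕ} (h1 : 1 ≤ r) (h2 : r + 1 ≤ i) :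
    chain i (base k i) r * chain i (base k i) (r + 1) = 0 := by
  have hrow : ∃ c : k, chain i (base k i) r = !![1, -1; c, -c] := by
    by_cases hr1 : r = 1
    · exact ⟨0, by rw [hr1, chain_one]; simp [base]⟩
    · obtain ⟨j, rfl⟩ := exists_fin_add_two (i := i) (r := r) (by omega) (by omega)
      exact ⟨1, by rw [chain_fin_add_two]; simp [base]⟩
  have hcol : ∃ c : k, chain i (base k i) (r + 1) = !![1, c; 1, c] := by
    rcases h2.eq_or_lt with h2 | h2
    · exact ⟨0, by rw [h2, chain_self (by omega)]; simp [base]⟩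
    · obtain ⟨j, hj⟩ := exists_fin_add_two (r := r + 1) (by omega) h2
      exact ⟨-1, by rw [hj, chain_fin_add_two]; simp [base]⟩
  obtain ⟨c, hc⟩ := hrow
  obtain ⟨c', hc'⟩ := hcol
  rw [hc, hc']
  ext p q
  fin_cases p <;> fin_cases q <;> simp [Matrix.mul_apply]

end ComplexData

namespace Z0

def rescale (t u : kˣ) (μ : ℕ → kˣ × kˣ) (x : Z0 k i) : Z0 k i :=
  ⟨x.1.rescale t u μ, by
    obtain ⟨hv, hM, hw, hchain⟩ := x.2
    refine ⟨?_, fun j => ?_, ?_, fun r h1 h2 =>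
      ComplexData.chain_rescale_mul_chain_rescale t u μ h1 h2 (hchain r h1 h2)⟩ <;>
    simp [ComplexData.rescale, hv, hM, hw]⟩

def base : Z0 k i :=
  ⟨ComplexData.base k i, by simp [ComplexData.base], fun _ => by simp [ComplexData.base],
    by simp [ComplexData.base], fun _ => ComplexData.chain_base_mul_chain_base⟩

theorem projZ0_rescale (t u : kˣ) (μ : ℕ → kˣ × kˣ) (x : Z0 k i) :
    projZ0 i (x.rescale t u μ) = Coeffs.rescale t u μ (projZ0 i x) := by
  ext <;> simp [projZ0, rescale, ComplexData.rescale, Coeffs.rescale]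

theorem exists_projZ0_rescale_eq (hi : i ≠ 0) (x : Z0 k i) (d : Coeffs kˣ i) :
    ∃ t u μ, projZ0 i (x.rescale t u μ) = d := by
  simpa only [projZ0_rescale] using Coeffs.exists_rescale_eq hi (projZ0 i x) d

theorem chain_apply_one_zero_ne (x : Z0 k i) {r : ℕ} (h2 : 2 ≤ r) (hr : r ≤ i) :
    chain i x.1 r 1 0 ≠ 0 := by
  rcases hr.eq_or_lt with rfl | hr
  · rw [chain_self (by omega)]
    simpa using x.2.1.2
  · obtain ⟨j, rfl⟩ := exists_fin_add_two h2 hr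
    rw [chain_fin_add_two]
    simpa using (x.2.2.1 j).2.2.1

theorem chain_apply_one_eq (x : Z0 k i) {r : ℕ} (h1 : 1 ≤ r) (h2 : r + 1 ≤ i) (p : Fin 2) :
    chain i x.1 r p 1 =
      -(chain i x.1 r p 0 * chain i x.1 (r + 1) 0 0) / chain i x.1 (r + 1) 1 0 := by
  have h := congrFun (congrFun (x.2.2.2.2 r h1 h2) p) 0
  rw [Matrix.mul_apply, Fin.sum_univ_two, Matrix.zero_apply] at h
  rw [eq_div_iff (chain_apply_one_zero_ne x (by omega) h2)]
  linear_combination h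

theorem chain_apply_zero_eq_of_projZ0_eq {x y : Z0 k i} (h : projZ0 i x = projZ0 i y)
    {r : ℕ} (h1 : 1 ≤ r) (hr : r ≤ i) (p : Fin 2) :
    chain i x.1 r p 0 = chain i y.1 r p 0 := by
  simp only [projZ0, Prod.ext_iff, funext_iff, Units.ext_iff, Units.val_mk0] at h
  by_cases hr1 : r = 1
  · subst hr1
    rw [chain_one, chain_one]
    fin_cases p <;> simp [h]
  rcases hr.eq_or_lt with rfl | hr
  · rw [chain_self hr1, chain_self hr1]
    fin_cases p <;> simp [h]
  · obtain ⟨j, rfl⟩ := exists_fin_add_two (by omega) hr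
    rw [chain_fin_add_two, chain_fin_add_two]
    fin_cases p <;> simp [h]

theorem projZ0_injective (hi : 2 ≤ i) : Function.Injective (projZ0 (k := k) i) := by
  intro x y h
  refine Subtype.ext (ComplexData.eq_of_chain_eq hi fun r h1 hr => ?_)
  ext p q
  fin_cases q
  · exact chain_apply_zero_eq_of_projZ0_eq h h1 hr p
  · rcases hr.eq_or_lt with rfl | hr
    · simp [chain_self (show r ≠ 1 by omega)]
    · show chain i x.1 r p 1 = chain i y.1 r p 1
      rw [chain_apply_one_eq x h1 hr, chain_apply_one_eq y h1 hr,
        chain_apply_zero_eq_of_projZ0_eq h h1 hr.le,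
        chain_apply_zero_eq_of_projZ0_eq h (r := r + 1) (by omega) hr,
        chain_apply_zero_eq_of_projZ0_eq h (r := r + 1) (by omega) hr]

end Z0

end

/-- The projection recording the nonzero coefficients
`(a_i, c_i, a_{i-1}, c_{i-1}, …, a_2, c_2, c_1)` is a bijection from `Z⁰` onto
`(kˣ)^{2i-1}`.  Consequently, the group `(kˣ)^{2i}` acting by rescaling the `2i`
coordinate lines (i.e. simultaneously rescaling the corresponding rows and columns of
the matrices and vectors) acts transitively on `Z⁰`: here `μ r` is the pair of scalars
at the pair of lines of level `r` (`1 ≤ r ≤ i - 1`), `t` the scalar at the top line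
(level `i`) and `u` the scalar at the bottom line (level `0`). -/
theorem z0_bijection_and_transitivity {k : Type*} [Field k] (i : ℕ) (hi : 2 ≤ i) :
    Function.Bijective (projZ0 (k := k) i) ∧
    ∀ x y : Z0 k i, ∃ (t u : kˣ) (μ : ℕ → kˣ × kˣ),
      (y.1.v.1 = ((μ (i - 1)).1 : k) * x.1.v.1 * ((t⁻¹ : kˣ) : k) ∧
       y.1.v.2 = ((μ (i - 1)).2 : k) * x.1.v.2 * ((t⁻¹ : kˣ) : k)) ∧
      (∀ j : Fin (i - 2),
        (y.1.M j).1.1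
          = ((μ ((j : ℕ) + 1)).1 : k) * (x.1.M j).1.1 * (((μ ((j : ℕ) + 2)).1⁻¹ : kˣ) : k) ∧
        (y.1.M j).1.2
          = ((μ ((j : ℕ) + 1)).1 : k) * (x.1.M j).1.2 * (((μ ((j : ℕ) + 2)).2⁻¹ : kˣ) : k) ∧
        (y.1.M j).2.1
          = ((μ ((j : ℕ) + 1)).2 : k) * (x.1.M j).2.1 * (((μ ((j : ℕ) + 2)).1⁻¹ : kˣ) : k) ∧
        (y.1.M j).2.2
          = ((μ ((j : ℕ) + 1)).2 : k) * (x.1.M j).2.2 * (((μ ((j : ℕ) + 2)).2⁻¹ : kˣ) : k)) ∧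
      (y.1.w.1 = (u : k) * x.1.w.1 * (((μ 1).1⁻¹ : kˣ) : k) ∧
       y.1.w.2 = (u : k) * x.1.w.2 * (((μ 1).2⁻¹ : kˣ) : k)) := by
  refine ⟨⟨Z0.projZ0_injective hi, fun d => ?_⟩, fun x y => ?_⟩
  · obtain ⟨t, u, μ, h⟩ := Z0.exists_projZ0_rescale_eq (by omega) Z0.base d
    exact ⟨_, h⟩
  · obtain ⟨t, u, μ, h⟩ := Z0.exists_projZ0_rescale_eq (by omega) x (projZ0 i y)
    obtain rfl := Z0.projZ0_injective hi h
    exact ⟨t, u, μ, ⟨rfl, rfl⟩, fun j => ⟨rfl, rfl, rfl, rfl⟩, rfl, rfl⟩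
end
end
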